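/- arXiv:1311.4850 — 3 statements merged into one kernel-verified Lean document; each statement's English description precedes it below -/
import Mathlib

section
/- The measure ℙ defined from the family (P_s : s ∈ S) and a strictly positive weight vector π = (π_s : s ∈ S) by ℙ(B) = ∑_{s∈S} π_s ∑_{n≥0} P_s({T > n} ∩ Θ_n^{-1}B) is a probability measure on I^ℕ if and only if ∑_{s∈S} π_s · E_s(T) = 1, where E_s denotes expectation under P_s. Consequently, there exists a strictly positive vector π making ℙ a probability measure if and only if E_s(T) < ∞ for every s ∈ S. -/
open MeasureTheory Filter
open scoped ENNReal NNReal ENat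

variable {I : Type*} [MeasurableSpace I]

/-- The shift map `Θ_q` on sequences: `(Θ_q x) n = x (n + q)`. -/
def shiftI (q : ℕ) (x : ℕ → I) : ℕ → I := fun n => x (n + q)

/-- The hitting time of a different class:
`T(x) = inf {n > 0 : x n ∈ S \ C(x 0)}` (with `inf ∅ = ∞`), where the class `C(x 0)` is
taken with respect to the equivalence relation `sim`. -/
noncomputable def hitT (S : Finset I) (sim : I → I → Prop) (x : ℕ → I) : ℕ∞ :=
  sInf ((fun n : ℕ => (n : ℕ∞)) '' {n : ℕ | 0 < n ∧ x n ∈ S ∧ ¬ sim (x 0) (x n)})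

/-- The expectation `E(T)` of the hitting time `T` under `P`. -/
noncomputable def hitET (S : Finset I) (sim : I → I → Prop) (P : Measure (ℕ → I)) : ℝ≥0∞ :=
  ∫⁻ x, (hitT S sim x : ℝ≥0∞) ∂P

/-- The measure `ℙ(B) = ∑_{s ∈ S} π_s ∑_{n ≥ 0} P_s({T > n} ∩ Θ_n⁻¹ B)`. -/
noncomputable def lawP (S : Finset I) (sim : I → I → Prop) (π : I → ℝ≥0)
    (P : I → Measure (ℕ → I)) : Measure (ℕ → I) :=
  ∑ s ∈ S, π s •
    Measure.sum (fun n : ℕ => ((P s).restrict {x | (n : ℕ∞) < hitT S sim x}).map (shiftI n))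

/-!
Integrating the shifted restrictions of `P_s` and using the tail-sum formula
`E(T) = ∑ₙ P(T > n)` for an `ℕ∞`-valued `T`, the total mass of `ℙ` is `∑ₛ πₛ Eₛ(T)`.
Since `T ≥ 1`, every `Eₛ(T)` is positive, so strictly positive weights normalising this sum
exist iff every `Eₛ(T)` is finite: take `πₛ = 1 / (|S| Eₛ(T))`.
-/

theorem ENat.toENNReal_eq_tsum_indicator (a : ℕ∞) :
    (a : ℝ≥0∞) = ∑' n : ℕ, {n : ℕ | (n : ℕ∞) < a}.indicator (fun _ => 1) n := by
  rw [← tsum_subtype, ENNReal.tsum_set_one]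
  induction a using ENat.recTopCoe with
  | top => simp [Set.encard_univ]
  | coe m =>
    have : {n : ℕ | (n : ℕ∞) < m} = Finset.range m := by ext; simp
    rw [this, Set.encard_coe_eq_coe_finsetCard, Finset.card_range]

theorem MeasureTheory.lintegral_toENNReal_eq_tsum_measure_lt {α : Type*} [MeasurableSpace α]
    (μ : Measure α) (f : α → ℕ∞) (hf : ∀ n : ℕ, MeasurableSet {x | (n : ℕ∞) < f x}) :
    ∫⁻ x, (f x : ℝ≥0∞) ∂μ = ∑' n : ℕ, μ {x | (n : ℕ∞) < f x} := by
  have h (x : α) : (f x : ℝ≥0∞) = ∑' n : ℕ, {y | (n : ℕ∞) < f y}.indicator (fun _ => 1) x :=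
    ENat.toENNReal_eq_tsum_indicator (f x)
  simp_rw [h]
  rw [lintegral_tsum fun n => (measurable_const.indicator (hf n)).aemeasurable]
  simp [lintegral_indicator (hf _)]

theorem ENNReal.exists_pos_weights_sum_mul_eq_one_iff {ι : Type*} (S : Finset ι)
    (hS : S.Nonempty) (E : ι → ℝ≥0∞) (hE : ∀ s ∈ S, E s ≠ 0) :
    (∃ π : ι → ℝ≥0, (∀ s ∈ S, 0 < π s) ∧ ∑ s ∈ S, (π s : ℝ≥0∞) * E s = 1) ↔
      ∀ s ∈ S, E s < ⊤ := by
  constructor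
  · rintro ⟨π, hπ, hsum⟩ s hs
    have hle : (π s : ℝ≥0∞) * E s ≤ 1 :=
      hsum ▸ Finset.single_le_sum (f := fun i => (π i : ℝ≥0∞) * E i) (fun _ _ => zero_le) hs
    exact lt_top_of_mul_ne_top_right (ne_top_of_le_ne_top one_ne_top hle)
      (by exact_mod_cast (hπ s hs).ne')
  · intro hfin
    have hcard : (S.card : ℝ≥0∞) ≠ 0 := by exact_mod_cast hS.card_pos.ne'
    have hcE_ne_zero : ∀ s ∈ S, (S.card : ℝ≥0∞) * E s ≠ 0 := fun s hs =>
      mul_ne_zero hcard (hE s hs)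
    have hcE_ne_top : ∀ s ∈ S, (S.card : ℝ≥0∞) * E s ≠ ⊤ := fun s hs =>
      mul_ne_top (natCast_ne_top _) (hfin s hs).ne
    refine ⟨fun s => ((S.card : ℝ≥0∞) * E s)⁻¹.toNNReal, fun s hs => ?_, ?_⟩
    · exact toNNReal_pos (ENNReal.inv_ne_zero.2 (hcE_ne_top s hs))
        (inv_ne_top.2 (hcE_ne_zero s hs))
    · calc ∑ s ∈ S, (((S.card : ℝ≥0∞) * E s)⁻¹.toNNReal : ℝ≥0∞) * E s
          = ∑ s ∈ S, (S.card : ℝ≥0∞)⁻¹ := Finset.sum_congr rfl fun s hs => by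
            rw [coe_toNNReal (inv_ne_top.2 (hcE_ne_zero s hs)),
              ENNReal.mul_inv (.inl hcard) (.inl (natCast_ne_top _)), mul_assoc,
              ENNReal.inv_mul_cancel (hE s hs) (hfin s hs).ne, mul_one]
        _ = 1 := by
            rw [Finset.sum_const, nsmul_eq_mul, ENNReal.mul_inv_cancel hcard (natCast_ne_top _)]

section

variable {ι : Type*} (S : Finset ι) (sim : ι → ι → Prop)

lemma one_le_hitT (x : ℕ → ι) : 1 ≤ hitT S sim x := by
  refine le_sInf ?_
  rintro _ ⟨m, hm, rfl⟩
  show 1 ≤ (m : ℕ∞)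
  exact_mod_cast hm.1

lemma lt_hitT_iff (n : ℕ) (x : ℕ → ι) :
    (n : ℕ∞) < hitT S sim x ↔ ∀ m ≤ n, 0 < m → x m ∈ S → sim (x 0) (x m) := by
  rw [← ENat.add_one_le_iff (ENat.natCast_ne_top n), hitT, le_sInf_iff]
  simp only [Set.mem_image, Set.mem_ofPred_eq, forall_exists_index, and_imp]
  refine ⟨fun h m hmn hm hmS => by_contra fun hsim => ?_, fun h _ m hm hmS hsim hmk => ?_⟩
  · have := h _ m hm hmS hsim rfl
    norm_cast at this
    omega
  · subst hmk
    by_contra hlt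
    exact hsim (h m (by norm_cast at hlt; omega) hm hmS)

variable [MeasurableSpace ι]

lemma measurable_shiftI (q : ℕ) : Measurable (shiftI (I := ι) q) :=
  measurable_pi_lambda _ fun n => measurable_pi_apply (n + q)

lemma one_le_hitET (μ : Measure (ℕ → ι)) [IsProbabilityMeasure μ] : 1 ≤ hitET S sim μ :=
  calc (1 : ℝ≥0∞) = ∫⁻ _, 1 ∂μ := by simp
    _ ≤ hitET S sim μ := lintegral_mono fun x => by
        simpa using ENat.toENNReal_le.2 (one_le_hitT S sim x)

variable [Countable ι] [MeasurableSingletonClass ι]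

lemma measurableSet_lt_hitT (n : ℕ) : MeasurableSet {x : ℕ → ι | (n : ℕ∞) < hitT S sim x} := by
  have : {x : ℕ → ι | (n : ℕ∞) < hitT S sim x} =
      ⋂ m ≤ n, (fun x => (x 0, x m)) ⁻¹' {p | 0 < m → p.2 ∈ S → sim p.1 p.2} := by
    ext x
    simp [lt_hitT_iff]
  rw [this]
  exact .iInter fun m => .iInter fun _ =>
    (measurable_pi_apply 0).prodMk (measurable_pi_apply m) .of_discrete

lemma hitET_eq_tsum (μ : Measure (ℕ → ι)) :
    hitET S sim μ = ∑' n : ℕ, μ {x | (n : ℕ∞) < hitT S sim x} :=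
  lintegral_toENNReal_eq_tsum_measure_lt μ _ (measurableSet_lt_hitT S sim)

lemma lawP_univ (π : ι → ℝ≥0) (P : ι → Measure (ℕ → ι)) :
    lawP S sim π P Set.univ = ∑ s ∈ S, (π s : ℝ≥0∞) * hitET S sim (P s) := by
  simp only [lawP, Measure.finsetSum_apply, Measure.smul_apply, ENNReal.smul_def, smul_eq_mul,
    Measure.sum_apply _ MeasurableSet.univ, hitET_eq_tsum,
    Measure.map_apply (measurable_shiftI _) MeasurableSet.univ, Set.preimage_univ,
    Measure.restrict_apply_univ]

lemma isProbabilityMeasure_lawP_iff (π : ι → ℝ≥0) (P : ι → Measure (ℕ → ι)) :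
    IsProbabilityMeasure (lawP S sim π P) ↔ ∑ s ∈ S, (π s : ℝ≥0∞) * hitET S sim (P s) = 1 := by
  rw [← lawP_univ]
  exact ⟨fun h => h.measure_univ, fun h => ⟨h⟩⟩

end

theorem stmt_0_general [Fintype I] [MeasurableSingletonClass I]
    (S : Finset I) (hS : S.Nonempty)
    (sim : I → I → Prop)
    (P : I → Measure (ℕ → I)) (hprob : ∀ s ∈ S, IsProbabilityMeasure (P s)) :
    (∀ π : I → ℝ≥0, (∀ s ∈ S, 0 < π s) →
      (IsProbabilityMeasure (lawP S sim π P) ↔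
        ∑ s ∈ S, (π s : ℝ≥0∞) * hitET S sim (P s) = 1)) ∧
    ((∃ π : I → ℝ≥0, (∀ s ∈ S, 0 < π s) ∧ IsProbabilityMeasure (lawP S sim π P)) ↔
      ∀ s ∈ S, hitET S sim (P s) < ⊤) := by
  refine ⟨fun π _ => isProbabilityMeasure_lawP_iff S sim π P, ?_⟩
  simp_rw [isProbabilityMeasure_lawP_iff]
  refine ENNReal.exists_pos_weights_sum_mul_eq_one_iff S hS _ fun s hs => ?_
  have := hprob s hs
  exact (zero_lt_one.trans_le (one_le_hitET S sim (P s))).ne'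

/-- For a fixed strictly positive weight vector `π`, the measure `ℙ` is a probability measure
iff `∑_{s ∈ S} π_s E_s(T) = 1`; consequently there is some strictly positive `π` making `ℙ`
a probability measure iff `E_s(T) < ∞` for every `s ∈ S`. -/
theorem stmt_0 [Fintype I] [MeasurableSingletonClass I]
    (S : Finset I) (hS : S.Nonempty) (hSc : ∃ i : I, i ∉ S)
    (sim : I → I → Prop) (hsim : Equivalence sim)
    (P : I → Measure (ℕ → I)) (hprob : ∀ s ∈ S, IsProbabilityMeasure (P s))
    (hstart : ∀ s ∈ S, P s {x | x 0 = s} = 1)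
    (hTfin : ∀ s ∈ S, P s {x | hitT S sim x < ⊤} = 1) :
    (∀ π : I → ℝ≥0, (∀ s ∈ S, 0 < π s) →
      (IsProbabilityMeasure (lawP S sim π P) ↔
        ∑ s ∈ S, (π s : ℝ≥0∞) * hitET S sim (P s) = 1)) ∧
    ((∃ π : I → ℝ≥0, (∀ s ∈ S, 0 < π s) ∧ IsProbabilityMeasure (lawP S sim π P)) ↔
      ∀ s ∈ S, hitET S sim (P s) < ⊤) :=
  stmt_0_general S hS sim P hprob
end

section
/- If a probability measure P on L^ℕ satisfies the Chargaff second parity rule with respect to the involution φ, then P is stationary: for all m ≥ 0, all (l_0,…,l_m) ∈ L^{m+1} and all t ≥ 1, P(Y_{k+t} = l_k, k = 0,…,m) = P(Y_k = l_k, k = 0,…,m). -/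
/-!
Summing over the letter in front, the probability of reading `w` at positions `1, …, m + 1` is
`∑ a, P(a w at 0, …, m + 1)`. The parity rule at time `0` turns `a w` into `w* φ(a)`, with `w*`
the reverse complement of `w`; as `φ` is a bijection, summing over the last letter gives
`P(w* at 0, …, m) = P(w at 0, …, m)`. This is stationarity for one step; shifts by `t` follow by
induction on `t`, again summing over the letter in front.
-/

open MeasureTheory

theorem measure_eq_sum_inter_preimage_singleton {α β : Type*} [MeasurableSpace α] [Fintype β]
    (μ : Measure α) {f : α → β} (hf : ∀ b, MeasurableSet (f ⁻¹' {b})) (s : Set α) :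
    μ s = ∑ b, μ (s ∩ f ⁻¹' {b}) := by
  have := sum_measure_preimage_singleton (μ := μ.restrict s) Finset.univ (fun b _ => hf b)
  simp_all [Measure.restrict_apply, Set.inter_comm]

section

variable {L : Type*}

def wordCylinder (t m : ℕ) (w : ℕ → L) : Set (ℕ → L) :=
  {y | ∀ k ≤ m, y (k + t) = w k}

def reverseComplement (φ : L → L) (m : ℕ) (w : ℕ → L) (k : ℕ) : L :=
  φ (w (m - k))

def consWord (a : L) (w : ℕ → L) (k : ℕ) : L :=
  if k = 0 then a else w (k - 1)

theorem wordCylinder_congr {t m : ℕ} {w w' : ℕ → L} (h : ∀ k ≤ m, w k = w' k) :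
    wordCylinder t m w = wordCylinder t m w' := by
  ext y
  exact forall₂_congr fun k hk => by rw [h k hk]

theorem wordCylinder_inter_eq_update (t m : ℕ) (w : ℕ → L) (a : L) :
    wordCylinder t m w ∩ (fun y => y (m + 1 + t)) ⁻¹' {a}
      = wordCylinder t (m + 1) (Function.update w (m + 1) a) := by
  ext y
  simp only [wordCylinder, Set.mem_inter_iff, Set.mem_ofPred_eq, Set.mem_preimage,
    Set.mem_singleton_iff, Nat.le_succ_iff_eq_or_le, forall_eq_or_imp, Function.update_self]
  constructor
  · rintro ⟨hw, ha⟩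
    refine ⟨ha, fun k hk => ?_⟩
    rw [Function.update_of_ne (by omega), hw k hk]
  · rintro ⟨ha, hw⟩
    refine ⟨fun k hk => ?_, ha⟩
    rw [hw k hk, Function.update_of_ne (by omega)]

theorem wordCylinder_succ_inter_eq_cons (t m : ℕ) (w : ℕ → L) (a : L) :
    wordCylinder (t + 1) m w ∩ (fun y => y t) ⁻¹' {a} = wordCylinder t (m + 1) (consWord a w) := by
  ext y
  simp only [wordCylinder, Set.mem_inter_iff, Set.mem_ofPred_eq, Set.mem_preimage,
    Set.mem_singleton_iff, consWord]
  constructor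
  · rintro ⟨hw, ha⟩ k hk
    rcases k with _ | k
    · simpa using ha
    · rw [show k + 1 + t = k + (t + 1) by omega]
      simpa using hw k (by omega)
  · intro h
    refine ⟨fun k hk => ?_, by simpa using h 0 (Nat.zero_le _)⟩
    rw [show k + (t + 1) = k + 1 + t by omega]
    simpa using h (k + 1) (by omega)

theorem reverseComplement_consWord (φ : L → L) (m : ℕ) (w : ℕ → L) (a : L) {k : ℕ}
    (hk : k ≤ m + 1) :
    reverseComplement φ (m + 1) (consWord a w) k
      = Function.update (reverseComplement φ m w) (m + 1) (φ a) k := by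
  rcases hk.lt_or_eq with hk | rfl
  · rw [Function.update_of_ne hk.ne]
    simp only [reverseComplement, consWord, if_neg (by omega : m + 1 - k ≠ 0)]
    congr 2
    omega
  · simp [reverseComplement, consWord]

variable [Fintype L] [MeasurableSpace L] [MeasurableSingletonClass L]

theorem measure_wordCylinder_eq_sum_update (P : Measure (ℕ → L)) (t m : ℕ) (w : ℕ → L) :
    P (wordCylinder t m w) = ∑ a, P (wordCylinder t (m + 1) (Function.update w (m + 1) a)) := by
  simp only [← wordCylinder_inter_eq_update]
  exact measure_eq_sum_inter_preimage_singleton P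
    (fun a => measurable_pi_apply _ (measurableSet_singleton a)) _

theorem measure_wordCylinder_succ_eq_sum_cons (P : Measure (ℕ → L)) (t m : ℕ) (w : ℕ → L) :
    P (wordCylinder (t + 1) m w) = ∑ a, P (wordCylinder t (m + 1) (consWord a w)) := by
  simp only [← wordCylinder_succ_inter_eq_cons]
  exact measure_eq_sum_inter_preimage_singleton P
    (fun a => measurable_pi_apply _ (measurableSet_singleton a)) _

theorem measure_wordCylinder_eq_of_shift_one {P : Measure (ℕ → L)}
    (h : ∀ m w, P (wordCylinder 1 m w) = P (wordCylinder 0 m w)) (t m : ℕ) (w : ℕ → L) :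
    P (wordCylinder t m w) = P (wordCylinder 0 m w) := by
  induction t generalizing m w with
  | zero => rfl
  | succ t ih =>
    calc P (wordCylinder (t + 1) m w)
        = ∑ a, P (wordCylinder 0 (m + 1) (consWord a w)) := by
          simp only [measure_wordCylinder_succ_eq_sum_cons, ih]
      _ = P (wordCylinder 0 m w) := by
          rw [← measure_wordCylinder_succ_eq_sum_cons, h]

theorem measure_wordCylinder_one_eq_of_reverseComplement {φ : L → L} (hφ : Function.Bijective φ)
    {P : Measure (ℕ → L)}
    (h : ∀ m w, P (wordCylinder 0 m w) = P (wordCylinder 0 m (reverseComplement φ m w)))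
    (m : ℕ) (w : ℕ → L) :
    P (wordCylinder 1 m w) = P (wordCylinder 0 m w) :=
  calc P (wordCylinder 1 m w)
      = ∑ a, P (wordCylinder 0 (m + 1) (consWord a w)) :=
        measure_wordCylinder_succ_eq_sum_cons P 0 m w
    _ = ∑ a, P (wordCylinder 0 (m + 1)
          (Function.update (reverseComplement φ m w) (m + 1) (φ a))) := by
        refine Finset.sum_congr rfl fun a _ => ?_
        rw [h, wordCylinder_congr fun k hk => reverseComplement_consWord φ m w a hk]
    _ = ∑ a, P (wordCylinder 0 (m + 1) (Function.update (reverseComplement φ m w) (m + 1) a)) :=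
        hφ.sum_comp fun a => P (wordCylinder 0 (m + 1)
          (Function.update (reverseComplement φ m w) (m + 1) a))
    _ = P (wordCylinder 0 m (reverseComplement φ m w)) :=
        (measure_wordCylinder_eq_sum_update P 0 m _).symm
    _ = P (wordCylinder 0 m w) := (h m w).symm

end

theorem stmt_11_general {L : Type*} [Fintype L] [MeasurableSpace L] [MeasurableSingletonClass L]
    (φ : L → L) (hφ : Function.Involutive φ)
    (P : Measure (ℕ → L))
    (hcspr : ∀ (t m : ℕ) (w : ℕ → L),
      P {y | ∀ k ≤ m, y (k + t) = w k} = P {y | ∀ k ≤ m, y (k + t) = φ (w (m - k))}) :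
    ∀ (m : ℕ) (w : ℕ → L) (t : ℕ), 1 ≤ t →
      P {y | ∀ k ≤ m, y (k + t) = w k} = P {y | ∀ k ≤ m, y k = w k} := by
  intro m w t _
  exact measure_wordCylinder_eq_of_shift_one
    (measure_wordCylinder_one_eq_of_reverseComplement hφ.bijective (hcspr 0)) t m w

/-- If `P` satisfies the Chargaff second parity rule with respect to the involution `φ`,
then `P` is stationary:
`P(Y_{k+t} = l_k, k = 0,…,m) = P(Y_k = l_k, k = 0,…,m)` for every `t ≥ 1`. -/
theorem stmt_11 {L : Type*} [Fintype L] [MeasurableSpace L] [MeasurableSingletonClass L]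
    (φ : L → L) (hφ : Function.Involutive φ)
    (P : Measure (ℕ → L)) [IsProbabilityMeasure P]
    (hcspr : ∀ (t m : ℕ) (w : ℕ → L),
      P {y | ∀ k ≤ m, y (k + t) = w k} = P {y | ∀ k ≤ m, y (k + t) = φ (w (m - k))}) :
    ∀ (m : ℕ) (w : ℕ → L) (t : ℕ), 1 ≤ t →
      P {y | ∀ k ≤ m, y (k + t) = w k} = P {y | ∀ k ≤ m, y k = w k} :=
  stmt_11_general φ hφ P hcspr
end

section
/- Let t ≥ 2 and suppose the probability measure P on L^ℕ satisfies the CSPR for words of length at most t: for all m < t, all (l_0,…,l_m) ∈ L^{m+1} and all u ≥ 0, P(Y_{k+u} = l_k, k = 0,…,m) = P(Y_{k+u} = φ(l_{m-k}), k = 0,…,m). Then P is stationary on cylinders of length at most t − 1: for all m < t − 1, all (l_0,…,l_m) ∈ L^{m+1} and all u ≥ 1, P(Y_{k+u} = l_k, k = 0,…,m) = P(Y_k = l_k, k = 0,…,m). -/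
/-!
Write `[w]ᵤ` for the cylinder `Y_{k+u} = w_k, k ≤ m`. Summing over the letter at time `u`,
`P [w]ᵤ₊₁ = ∑ₗ P [l w]ᵤ`. Reversibility for words of length `m + 2` turns `l w` into
`w̃ (φ l)`, where `w̃` is the reflected word, and since `φ` is a bijection, summing over `l` gives
`P [w̃]ᵤ`, which equals `P [w]ᵤ` by reversibility for words of length `m + 1`. So `P [w]ᵤ` does
not depend on `u`.
-/

open MeasureTheory

namespace WordCylinder

variable {L : Type*}

def cylinder (u m : ℕ) (w : ℕ → L) : Set (ℕ → L) := {y | ∀ k ≤ m, y (k + u) = w k}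

def prepend (l : L) (w : ℕ → L) : ℕ → L
  | 0 => l
  | k + 1 => w k

/-- The word `φ wₘ, …, φ w₀`: time reversal composed with `φ`. -/
def reflect (φ : L → L) (m : ℕ) (w : ℕ → L) (k : ℕ) : L := φ (w (m - k))

lemma cylinder_congr {u m : ℕ} {w w' : ℕ → L} (h : ∀ k ≤ m, w k = w' k) :
    cylinder u m w = cylinder u m w' := by
  ext y
  exact forall₂_congr fun k hk => by rw [h k hk]

lemma cylinder_succ_eq_inter (u m : ℕ) (w : ℕ → L) :
    cylinder u (m + 1) w = cylinder u m w ∩ {y | y (m + 1 + u) = w (m + 1)} := by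
  ext y
  simp only [cylinder, Set.mem_inter_iff, Set.mem_ofPred_eq, Nat.le_succ_iff, or_imp, forall_and,
    forall_eq]

lemma cylinder_prepend (u m : ℕ) (l : L) (w : ℕ → L) :
    cylinder u (m + 1) (prepend l w) = cylinder (u + 1) m w ∩ {y | y u = l} := by
  ext y
  simp only [cylinder, Set.mem_inter_iff, Set.mem_ofPred_eq]
  constructor
  · intro h
    refine ⟨fun k hk => ?_, by simpa [prepend] using h 0 (Nat.zero_le _)⟩
    simpa [prepend, Nat.add_right_comm, Nat.add_assoc] using h (k + 1) (by omega)
  · rintro ⟨h, h0⟩ (_ | k) hk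
    · simpa [prepend] using h0
    · simpa [prepend, Nat.add_right_comm, Nat.add_assoc] using h k (by omega)

lemma reflect_reflect {φ : L → L} (hφ : Function.Involutive φ) {m k : ℕ} (w : ℕ → L)
    (hk : k ≤ m) :
    reflect φ m (reflect φ m w) k = w k := by
  simp [reflect, Nat.sub_sub_self hk, hφ (w k)]

lemma reflect_prepend (φ : L → L) (m : ℕ) (l : L) (w : ℕ → L) {k : ℕ} (hk : k ≤ m + 1) :
    reflect φ (m + 1) (prepend l w) k = Function.update (reflect φ m w) (m + 1) (φ l) k := by
  rcases hk.lt_or_eq with hk | rfl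
  · rw [Function.update_of_ne hk.ne, reflect, reflect, show m + 1 - k = (m - k) + 1 by omega]
    rfl
  · simp [reflect, prepend]

variable [Fintype L] [MeasurableSpace L] [MeasurableSingletonClass L]

lemma measure_eq_sum_inter_coord_eq (P : Measure (ℕ → L)) (S : Set (ℕ → L)) (i : ℕ) :
    P S = ∑ l : L, P (S ∩ {y | y i = l}) := by
  have hfib : ∀ l : L, MeasurableSet ((fun y : ℕ → L => y i) ⁻¹' {l}) := fun l =>
    measurable_pi_apply i (measurableSet_singleton l)
  have := sum_measure_preimage_singleton (μ := P.restrict S) Finset.univ fun l _ => hfib l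
  rw [Finset.coe_univ, Set.preimage_univ, Measure.restrict_apply_univ] at this
  rw [← this]
  exact Finset.sum_congr rfl fun l _ => by rw [Measure.restrict_apply (hfib l), Set.inter_comm]; rfl

variable {φ : L → L} {P : Measure (ℕ → L)}

lemma measure_cylinder_succ (hφ : Function.Involutive φ) {m : ℕ}
    (hrev : ∀ n ≤ m + 1, ∀ u w, P (cylinder u n w) = P (cylinder u n (reflect φ n w)))
    (u : ℕ) (w : ℕ → L) :
    P (cylinder (u + 1) m w) = P (cylinder u m w) := by
  set v := reflect φ m w
  calc P (cylinder (u + 1) m w)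
      = ∑ l, P (cylinder u (m + 1) (prepend l w)) := by
        rw [measure_eq_sum_inter_coord_eq P _ u]
        simp only [cylinder_prepend]
    _ = ∑ l, P (cylinder u (m + 1) (Function.update v (m + 1) (φ l))) := by
        refine Finset.sum_congr rfl fun l _ => ?_
        rw [hrev (m + 1) le_rfl, cylinder_congr fun k hk => reflect_prepend φ m l w hk]
    _ = ∑ l, P (cylinder u (m + 1) (Function.update v (m + 1) l)) :=
        Equiv.sum_comp (hφ.toPerm φ) fun l => P (cylinder u (m + 1) (Function.update v (m + 1) l))
    _ = P (cylinder u m v) := by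
        rw [measure_eq_sum_inter_coord_eq P (cylinder u m v) (m + 1 + u)]
        refine Finset.sum_congr rfl fun l _ => ?_
        rw [cylinder_succ_eq_inter, Function.update_self,
          cylinder_congr fun k hk => Function.update_of_ne (by omega : k ≠ m + 1) l v]
    _ = P (cylinder u m w) := by
        rw [hrev m (by omega), cylinder_congr fun k hk => reflect_reflect hφ w hk]

lemma measure_cylinder_eq_measure_cylinder_zero (hφ : Function.Involutive φ) {m : ℕ}
    (hrev : ∀ n ≤ m + 1, ∀ u w, P (cylinder u n w) = P (cylinder u n (reflect φ n w)))
    (u : ℕ) (w : ℕ → L) :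
    P (cylinder u m w) = P (cylinder 0 m w) := by
  induction u with
  | zero => rfl
  | succ u ih => rw [measure_cylinder_succ hφ hrev, ih]

end WordCylinder

theorem stmt_14_general {L : Type*} [Fintype L] [MeasurableSpace L] [MeasurableSingletonClass L]
    (φ : L → L) (hφ : Function.Involutive φ)
    (P : Measure (ℕ → L))
    (t : ℕ)
    (hcspr : ∀ m : ℕ, m < t → ∀ (u : ℕ) (w : ℕ → L),
      P {y | ∀ k ≤ m, y (k + u) = w k} = P {y | ∀ k ≤ m, y (k + u) = φ (w (m - k))}) :
    ∀ m : ℕ, m < t - 1 → ∀ u : ℕ, 1 ≤ u → ∀ w : ℕ → L,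
      P {y | ∀ k ≤ m, y (k + u) = w k} = P {y | ∀ k ≤ m, y k = w k} := by
  intro m hm u _ w
  exact WordCylinder.measure_cylinder_eq_measure_cylinder_zero hφ
    (fun n hn => hcspr n (by omega)) u w

/-- If `P` satisfies the CSPR for words of length at most `t` (`t ≥ 2`), then `P` is
stationary on cylinders of length at most `t - 1`. -/
theorem stmt_14 {L : Type*} [Fintype L] [MeasurableSpace L] [MeasurableSingletonClass L]
    (φ : L → L) (hφ : Function.Involutive φ)
    (P : Measure (ℕ → L)) [IsProbabilityMeasure P]
    (t : ℕ) (ht : 2 ≤ t)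
    (hcspr : ∀ m : ℕ, m < t → ∀ (u : ℕ) (w : ℕ → L),
      P {y | ∀ k ≤ m, y (k + u) = w k} = P {y | ∀ k ≤ m, y (k + u) = φ (w (m - k))}) :
    ∀ m : ℕ, m < t - 1 → ∀ u : ℕ, 1 ≤ u → ∀ w : ℕ → L,
      P {y | ∀ k ≤ m, y (k + u) = w k} = P {y | ∀ k ≤ m, y k = w k} :=
  stmt_14_general φ hφ P t hcspr
end
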